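/- arXiv:2112.07506 — 4 statements merged into one kernel-verified Lean document; each statement's English description precedes it below -/
import Mathlib

section
/- Let p ∈ P(k, k) be a projective partition. Then for any partitions q ∈ P(l, l) and r ∈ P(k, l), the number of removed loops satisfies rl(q, rp) = rl(q, rpr*), where rl(a, b) denotes the number of closed loops produced when vertically concatenating a on top of b. -/
attribute [local instance] Classical.propDecidable

namespace Partitions

/-- A partition with upper row indexed by `α` and lower row indexed by `β`,
modeled as an equivalence relation (set partition) on the disjoint union. -/
abbrev Partn (α β : Type) := Setoid (α ⊕ β)

variable {α β γ α' β' : Type}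

/-- Reflection across the horizontal axis: swap upper and lower rows. -/
def reflP (p : Partn α β) : Partn β α := Setoid.comap Sum.swap p

/-- Inclusion of the two-row diagram of the top partition into the three-row diagram. -/
def iTop : α ⊕ β → α ⊕ β ⊕ γ := Sum.map id Sum.inl

/-- Inclusion of the two-row diagram of the bottom partition into the three-row diagram. -/
def iBot (α : Type) {β γ : Type} : β ⊕ γ → α ⊕ β ⊕ γ := Sum.inr

/-- Inclusion of the outer (top and bottom) rows into the three-row diagram. -/
def iOut : α ⊕ γ → α ⊕ β ⊕ γ := Sum.map id Sum.inr

/-- Inclusion of the middle row into the three-row diagram. -/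
def iMid (α : Type) {β : Type} (γ : Type) (b : β) : α ⊕ β ⊕ γ := Sum.inr (Sum.inl b)

/-- The equivalence relation generated on the three-row diagram when stacking
`p` (with rows `α`, `β`) on top of `q` (with rows `β`, `γ`). -/
def glue (q : Partn β γ) (p : Partn α β) : Setoid (α ⊕ β ⊕ γ) :=
  Relation.EqvGen.setoid (fun x y =>
    (∃ u v, p.r u v ∧ x = iTop u ∧ y = iTop v) ∨
    (∃ u v, q.r u v ∧ x = iBot α u ∧ y = iBot α v))

/-- Vertical concatenation: `p` on top, `q` below; restrict the glued relation to
the outer rows. -/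
def vcomp (q : Partn β γ) (p : Partn α β) : Partn α γ :=
  Setoid.comap iOut (glue q p)

/-- A projective partition: `p² = p = p*`. -/
def Projective (p : Partn α α) : Prop := vcomp p p = p ∧ reflP p = p

/-- A middle point lying on a removed loop: it is connected to no outer point. -/
def IsLoopPt (q : Partn β γ) (p : Partn α β) (b : β) : Prop :=
  ∀ x : α ⊕ γ, ¬ (glue q p).r (iMid α γ b) (iOut x)

/-- The number of removed loops `rl(q, p)` in the vertical concatenation. -/
noncomputable def rl (q : Partn β γ) (p : Partn α β) : ℕ :=
  Nat.card (Quotient (Setoid.comap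
    (fun b : {b : β // IsLoopPt q p b} => iMid α γ b.1) (glue q p)))

/-- The disjoint union of two set partitions. -/
def sumSetoid (p : Setoid α) (q : Setoid β) : Setoid (α ⊕ β) :=
  ⟨Sum.LiftRel p.r q.r, by
    refine ⟨?_, ?_, ?_⟩
    · rintro (a | b)
      · exact .inl (p.iseqv.refl a)
      · exact .inr (q.iseqv.refl b)
    · rintro _ _ (h | h)
      · exact .inl (p.iseqv.symm h)
      · exact .inr (q.iseqv.symm h)
    · rintro _ _ _ (h | h) h₂
      · cases h₂ with
        | inl h₂ => exact .inl (p.iseqv.trans h h₂)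
      · cases h₂ with
        | inr h₂ => exact .inr (q.iseqv.trans h h₂)⟩

/-- Horizontal concatenation `p ⊙ q` of partitions. -/
def hconcat (p : Partn α β) (q : Partn α' β') : Partn (α ⊕ α') (β ⊕ β') :=
  Setoid.comap (Equiv.sumSumSumComm α α' β β') (sumSetoid p q)

/-- Number of through-blocks `t(p)`: blocks containing both an upper and a lower point. -/
noncomputable def throughCount (p : Partn α β) : ℕ :=
  Nat.card {c : Quotient p //
    (∃ a : α, Quotient.mk p (Sum.inl a) = c) ∧ ∃ b : β, Quotient.mk p (Sum.inr b) = c}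

/-- `δ_p(i, j)`: `1` if the indices are constant on each block of `p`, `0` otherwise. -/
noncomputable def deltaP (N : ℕ) (p : Partn α β) (f : α → Fin N) (g : β → Fin N) : ℂ :=
  if ∀ x y, p.r x y → Sum.elim f g x = Sum.elim f g y then 1 else 0

/-- The matrix of the linear map `T_p : (ℂ^N)^{⊗α} → (ℂ^N)^{⊗β}` in the canonical bases. -/
noncomputable def partMatrix (N : ℕ) (p : Partn α β) :
    Matrix (β → Fin N) (α → Fin N) ℂ :=
  fun g f => deltaP N p f g

/-- The identity partition `|` in `P(1,1)` (one block joining the two points). -/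
def identP : Partn (Fin 1) (Fin 1) := ⊤

end Partitions

/-! Write `s = rp`. Since `p` is projective, `(rp)* = p r*` and `s p = s`, so by associativity
`r p r* = s s*`. The loops of `q ∘ X` only see the lower row of `X`: the partition `X` induces on
it, and which of its points reach the upper row (a path from the upper row can always be rerouted
to enter the lower rows through a single block of `X`). Putting `s*` on top of `s` changes
neither: the lower row of `s*` only joins upper points of `s` that `s` already joins, and a lower
point reaches the upper row of `s s*` exactly when it reaches that of `s`. -/

namespace Setoid

variable {W X Y Z : Type*}

theorem map_rel_iff_of_injective {r : Setoid X} {f : X → Y} (hf : f.Injective) {y y' : Y} :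
    r.map f y y' ↔ y = y' ∨ ∃ a b, r a b ∧ f a = y ∧ f b = y' := by
  rw [coe_map_of_ker_le r f (ker_eq_bot_iff.2 hf ▸ bot_le)]
  exact or_comm

theorem map_rel_mem_range {r : Setoid X} {f : X → Y} (hf : f.Injective) {y y' : Y}
    (h : r.map f y y') (hne : y ≠ y') : y' ∈ Set.range f := by
  rcases (map_rel_iff_of_injective hf).1 h with h | ⟨_, b, -, -, rfl⟩
  · exact absurd h hne
  · exact ⟨b, rfl⟩

theorem map_le_iff_le_comap {r : Setoid X} {f : X → Y} {s : Setoid Y} :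
    r.map f ≤ s ↔ r ≤ comap f s :=
  ⟨fun h _ _ hr => h (le_comap_map hr),
    fun h => eqvGen_le (by rintro _ _ ⟨a, b, hab, rfl, rfl⟩; exact h hab)⟩

theorem gc_map_comap (f : X → Y) : GaloisConnection (fun r : Setoid X => r.map f) (comap f) :=
  fun _ _ => map_le_iff_le_comap

theorem map_sup (r s : Setoid X) (f : X → Y) : (r ⊔ s).map f = r.map f ⊔ s.map f :=
  (gc_map_comap f).l_sup

theorem map_map (r : Setoid X) (f : X → Y) (g : Y → Z) : (r.map f).map g = r.map (g ∘ f) :=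
  ((gc_map_comap f).compose (gc_map_comap g)).l_unique (gc_map_comap (g ∘ f)) fun _ => rfl

/-- `h` says that the square `e ∘ i = w ∘ o` commutes and is a pullback. -/
theorem comap_map_of_isPullback {e : Y → Z} {w : X → Z} {i : W → Y} {o : W → X}
    (he : e.Injective) (hw : w.Injective) (hi : i.Injective)
    (h : ∀ y x, e y = w x ↔ ∃ u, i u = y ∧ o u = x) (S : Setoid X) :
    comap e (S.map w) = (comap o S).map i := by
  ext y y'
  rw [comap_rel, map_rel_iff_of_injective hw, map_rel_iff_of_injective hi, he.eq_iff]
  refine or_congr_right ⟨?_, ?_⟩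
  · rintro ⟨a, b, hab, ha, hb⟩
    obtain ⟨u, rfl, rfl⟩ := (h y a).1 ha.symm
    obtain ⟨u', rfl, rfl⟩ := (h y' b).1 hb.symm
    exact ⟨u, u', hab, rfl, rfl⟩
  · rintro ⟨u, u', hu, rfl, rfl⟩
    exact ⟨o u, o u', hu, ((h _ _).2 ⟨u, rfl, rfl⟩).symm,
      ((h _ _).2 ⟨u', rfl, rfl⟩).symm⟩

theorem sup_rel_iff_of_rel_mem_range {S T : Setoid Z} {e : Y → Z}
    (hT : ∀ z z', T z z' → z ≠ z' → z' ∈ Set.range e) (z : Z) (y : Y) :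
    (S ⊔ T) z (e y) ↔ ∃ x, S z (e x) ∧ (comap e S ⊔ comap e T) x y := by
  set H := comap e S ⊔ comap e T
  have hH : H ≤ comap e (S ⊔ T) :=
    sup_le (fun _ _ h => le_sup_left (a := S) h) fun _ _ h => le_sup_right (b := T) h
  refine ⟨fun h => ?_, fun ⟨x, hS, hx⟩ =>
    (S ⊔ T).trans' (le_sup_left (a := S) hS) (hH hx)⟩
  -- the set of points reachable through an `S`-step into the range of `e` is `S ⊔ T`-invariant
  let f : Z → Set Y := fun z => {y | ∃ x, S z (e x) ∧ H x y}
  have hf : ∀ a, f (e a) = {y | H a y} := fun a => Set.ext fun y =>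
    ⟨fun ⟨x, hS, hx⟩ => H.trans' (le_sup_left (a := comap e S) hS) hx,
      fun hy => ⟨a, S.refl' _, hy⟩⟩
  have hker : S ⊔ T ≤ ker f := by
    refine sup_le (fun z z' h => Set.ext fun y => ?_) fun z z' h => ?_
    · exact ⟨fun ⟨x, hS, hx⟩ => ⟨x, S.trans' (S.symm' h) hS, hx⟩,
        fun ⟨x, hS, hx⟩ => ⟨x, S.trans' h hS, hx⟩⟩
    by_cases hzz : z = z'
    · exact congrArg f hzz
    obtain ⟨b, rfl⟩ := hT z z' h hzz
    obtain ⟨a, rfl⟩ := hT _ _ (T.symm' h) (Ne.symm hzz)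
    have hab : H a b := le_sup_right (b := comap e T) h
    show f (e a) = f (e b)
    rw [hf, hf]
    exact Set.ext fun y => ⟨H.trans' (H.symm' hab), H.trans' hab⟩
  have : y ∈ f (e y) := by rw [hf]; exact H.refl' y
  rwa [← ker_def.1 (hker h)] at this

theorem comap_sup_of_rel_mem_range {S T : Setoid Z} {e : Y → Z}
    (hT : ∀ z z', T z z' → z ≠ z' → z' ∈ Set.range e) :
    comap e (S ⊔ T) = comap e S ⊔ comap e T := by
  ext a b
  refine (sup_rel_iff_of_rel_mem_range hT (e a) b).trans ⟨fun ⟨x, hS, hx⟩ => ?_,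
    fun h => ⟨a, S.refl' _, h⟩⟩
  exact (comap e S ⊔ comap e T).trans' (le_sup_left (a := comap e S) hS) hx

theorem comap_sup_map_of_range_subset {S : Setoid Z} {r : Setoid X} {f : X → Z} {e : Y → Z}
    (hf : f.Injective) (hfe : Set.range f ⊆ Set.range e) :
    comap e (S ⊔ r.map f) = comap e S ⊔ comap e (r.map f) :=
  comap_sup_of_rel_mem_range fun _ _ h hne => hfe (map_rel_mem_range hf h hne)

end Setoid

namespace Partitions

open Setoid Function

variable {α β γ δ : Type}

theorem iTop_injective : Injective (iTop : α ⊕ β → α ⊕ β ⊕ γ) :=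
  Sum.map_injective.2 ⟨injective_id, Sum.inl_injective⟩

theorem iBot_injective : Injective (iBot α : β ⊕ γ → α ⊕ β ⊕ γ) :=
  Sum.inr_injective

theorem iOut_injective : Injective (iOut : α ⊕ γ → α ⊕ β ⊕ γ) :=
  Sum.map_injective.2 ⟨injective_id, Sum.inr_injective⟩

theorem glue_eq_sup (q : Partn β γ) (p : Partn α β) :
    glue q p = p.map iTop ⊔ q.map (iBot α) := by
  rw [sup_eq_eqvGen]
  refine le_antisymm (eqvGen_le ?_) (eqvGen_le ?_)
  · rintro _ _ (⟨u, v, h, rfl, rfl⟩ | ⟨u, v, h, rfl, rfl⟩)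
    · exact Relation.EqvGen.rel _ _ (.inl (le_comap_map h))
    · exact Relation.EqvGen.rel _ _ (.inr (le_comap_map h))
  · rintro _ _ (h | h)
    · exact eqvGen_mono (fun _ _ ⟨u, v, h, hu, hv⟩ => .inl ⟨u, v, h, hu.symm, hv.symm⟩) h
    · exact eqvGen_mono (fun _ _ ⟨u, v, h, hu, hv⟩ => .inr ⟨u, v, h, hu.symm, hv.symm⟩) h

theorem glue_comap_bot (Q : Partn β (γ ⊕ δ)) (A : Partn α β) :
    glue (comap iOut Q) A = comap (Sum.map id iOut) (glue Q A) := by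
  have he : Injective (Sum.map id iOut : α ⊕ β ⊕ δ → α ⊕ β ⊕ γ ⊕ δ) :=
    Sum.map_injective.2 ⟨injective_id, iOut_injective⟩
  have hA :
      Set.range (iTop : α ⊕ β → α ⊕ β ⊕ γ ⊕ δ) ⊆ Set.range (Sum.map id iOut) := by
    rintro _ ⟨u, rfl⟩
    exact ⟨iTop u, by rcases u <;> rfl⟩
  rw [glue_eq_sup, glue_eq_sup, sup_comm (A.map iTop) (Q.map (iBot α)),
    comap_sup_map_of_range_subset iTop_injective hA,
    comap_map_of_isPullback (o := iOut) he iBot_injective iBot_injective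
      (by rintro (a | b | d) (b' | c | d') <;> simp [iBot, iOut]),
    comap_map_of_isPullback (o := id) he iTop_injective iTop_injective
      (by rintro (a | b | d) (a' | b') <;> simp [iTop, iOut, eq_comm])]
  exact sup_comm _ _

theorem glue_comap_top (A : Partn α β) (B : Partn β γ) (C : Partn γ δ) :
    glue C (comap iOut (glue B A)) = comap iOut (glue (glue C B) A) := by
  have hA : (Sum.map id iTop ∘ iTop : α ⊕ β → α ⊕ β ⊕ γ ⊕ δ) = iTop := by
    funext x; rcases x <;> rfl
  have h4 : glue (glue C B) A = (glue B A).map (Sum.map id iTop) ⊔ C.map (iOut ∘ iBot α) := by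
    simp only [glue_eq_sup, map_sup, map_map, hA, ← sup_assoc]
    rfl
  rw [h4, comap_sup_map_of_range_subset (iOut_injective.comp iBot_injective)
      (Set.range_comp_subset_range _ _),
    comap_map_of_isPullback (o := iOut) iOut_injective
      (Sum.map_injective.2 ⟨injective_id, iTop_injective⟩) iTop_injective
      (by rintro (a | c | d) (a' | b | c') <;> simp [iTop, iOut]),
    ← map_map, comap_map_eq _ _ iOut_injective, glue_eq_sup]

theorem vcomp_assoc (A : Partn α β) (B : Partn β γ) (C : Partn γ δ) :
    vcomp C (vcomp B A) = vcomp (vcomp C B) A := by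
  -- both sides restrict the four-row diagram `glue (glue C B) A` to its outer rows
  have h : (iOut ∘ iOut : α ⊕ δ → α ⊕ β ⊕ γ ⊕ δ) = Sum.map id iOut ∘ iOut := by
    funext x; rcases x with a | d <;> rfl
  unfold vcomp
  rw [glue_comap_top, glue_comap_bot, ← comap_comp, ← comap_comp, h]
  rfl

def flipRows : γ ⊕ β ⊕ α → α ⊕ β ⊕ γ
  | .inl c => .inr (.inr c)
  | .inr (.inl b) => .inr (.inl b)
  | .inr (.inr a) => .inl a

theorem flipRows_flipRows (x : α ⊕ β ⊕ γ) : flipRows (flipRows x) = x := by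
  rcases x with a | b | c <;> rfl

theorem flipRows_injective : Injective (flipRows : γ ⊕ β ⊕ α → α ⊕ β ⊕ γ) :=
  fun x y h => by rw [← flipRows_flipRows x, h, flipRows_flipRows]

theorem comap_flipRows_glue (q : Partn β γ) (p : Partn α β) :
    comap flipRows (glue q p) = glue (reflP p) (reflP q) := by
  rw [glue_eq_sup, glue_eq_sup,
    comap_sup_of_rel_mem_range fun _ z _ _ => ⟨flipRows z, flipRows_flipRows z⟩, sup_comm,
    comap_map_of_isPullback (o := Sum.swap) flipRows_injective iBot_injective iTop_injective
      (by rintro (c | b | a) (b' | c') <;> simp [flipRows, iTop, iBot]),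
    comap_map_of_isPullback (o := Sum.swap) flipRows_injective iTop_injective iBot_injective
      (by rintro (c | b | a) (a' | b') <;> simp [flipRows, iTop, iBot])]
  rfl

theorem reflP_vcomp (p : Partn α β) (q : Partn β γ) :
    reflP (vcomp q p) = vcomp (reflP p) (reflP q) := by
  have h : (iOut ∘ Sum.swap : γ ⊕ α → α ⊕ β ⊕ γ) = flipRows ∘ iOut := by
    funext x; rcases x <;> rfl
  unfold vcomp
  rw [← comap_flipRows_glue]
  unfold reflP
  rw [← comap_comp, h]
  rfl

theorem comap_iBot_glue (q : Partn β γ) (p : Partn α β) :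
    comap (iBot α) (glue q p) = (comap Sum.inr p).map Sum.inl ⊔ q := by
  rw [glue_eq_sup, comap_sup_map_of_range_subset iBot_injective subset_rfl,
    comap_map_of_isPullback (o := Sum.inr) iBot_injective iTop_injective Sum.inl_injective
      (by rintro (b | c) (a | b') <;> simp [iTop, iBot]),
    comap_map_eq _ _ iBot_injective]

theorem glue_inl_iBot_iff (q : Partn β γ) (p : Partn α β) (a : α) (w : β ⊕ γ) :
    glue q p (.inl a) (iBot α w) ↔
      ∃ b, p (.inl a) (.inr b) ∧ comap (iBot α) (glue q p) (.inl b) w := by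
  have hT : ∀ z z', q.map (iBot α) z z' → z ≠ z' → z' ∈ Set.range (iBot α) :=
    fun _ _ h hne => map_rel_mem_range iBot_injective h hne
  rw [glue_eq_sup, sup_rel_iff_of_rel_mem_range hT, comap_sup_of_rel_mem_range hT]
  constructor
  · rintro ⟨b | c, hb, hbw⟩
    · exact ⟨b, (comap_map_eq iTop p iTop_injective).le hb, hbw⟩
    · obtain ⟨u, hu⟩ := map_rel_mem_range iTop_injective hb (by simp [iBot])
      rcases u with _ | _ <;> simp [iTop, iBot] at hu
  · rintro ⟨b, hb, hbw⟩
    exact ⟨.inl b, le_comap_map (f := iTop) hb, hbw⟩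

theorem isLoopPt_iff {q : Partn β γ} {p : Partn α β} {b : β} :
    IsLoopPt q p b ↔
      (∀ m, (∃ a, p (.inl a) (.inr m)) → ¬ comap (iBot α) (glue q p) (.inl m) (.inl b)) ∧
        ∀ c, ¬ comap (iBot α) (glue q p) (.inl b) (.inr c) := by
  constructor
  · intro h
    refine ⟨fun m ⟨a, ha⟩ hm => h (.inl a) ?_, fun c hc => h (.inr c) hc⟩
    exact (glue q p).symm' ((glue_inl_iBot_iff q p a _).2 ⟨m, ha, hm⟩)
  · rintro ⟨hthrough, hbot⟩ (a | c) h
    · obtain ⟨m, ha, hm⟩ := (glue_inl_iBot_iff q p a _).1 ((glue q p).symm' h)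
      exact hthrough m ⟨a, ha⟩ hm
    · exact hbot c h

theorem rl_congr {κ κ' : Type} (q : Partn β γ) {X : Partn κ β} {X' : Partn κ' β}
    (hbot : comap Sum.inr X = comap Sum.inr X')
    (hthrough : ∀ m, (∃ a, X (.inl a) (.inr m)) ↔ ∃ a, X' (.inl a) (.inr m)) :
    rl q X = rl q X' := by
  have hglue : comap (iBot κ) (glue q X) = comap (iBot κ') (glue q X') := by
    rw [comap_iBot_glue, comap_iBot_glue, hbot]
  have hloop : IsLoopPt q X = IsLoopPt q X' := by
    funext b
    rw [isLoopPt_iff, isLoopPt_iff, hglue]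
    simp only [hthrough]
  exact Nat.card_congr (Quotient.congr (Equiv.subtypeEquivRight fun b => by rw [hloop])
    fun b b' => by
      show comap (iBot κ) (glue q X) (.inl b.1) (.inl b'.1) ↔
        comap (iBot κ') (glue q X') (.inl b.1) (.inl b'.1)
      rw [hglue])

theorem comap_iBot_glue_reflP (s : Partn α β) : comap (iBot β) (glue s (reflP s)) = s := by
  rw [comap_iBot_glue]
  exact sup_eq_right.2 (map_le_iff_le_comap.2 le_rfl)

theorem comap_inr_vcomp_reflP (s : Partn α β) :
    comap Sum.inr (vcomp s (reflP s)) = comap Sum.inr s :=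
  congrArg (comap Sum.inr) (comap_iBot_glue_reflP s)

theorem exists_vcomp_reflP_iff (s : Partn α β) (b : β) :
    (∃ y, vcomp s (reflP s) (.inl y) (.inr b)) ↔ ∃ m, s (.inl m) (.inr b) := by
  constructor
  · rintro ⟨y, hy⟩
    obtain ⟨m, -, hm⟩ := (glue_inl_iBot_iff s (reflP s) y (.inr b)).1 hy
    rw [comap_iBot_glue_reflP] at hm
    exact ⟨m, hm⟩
  · rintro ⟨m, hm⟩
    refine ⟨b, (glue_inl_iBot_iff s (reflP s) b (.inr b)).2 ⟨m, s.symm' hm, ?_⟩⟩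
    rwa [comap_iBot_glue_reflP]

/-- For a projective partition `p ∈ P(k,k)` and any `q ∈ P(l,l)`,
`r ∈ P(k,l)`, one has `rl(q, rp) = rl(q, rpr*)`. -/
theorem rl_vcomp_eq_rl_vcomp_reflP (k l : ℕ) (p : Partn (Fin k) (Fin k))
    (hp : Projective p) (q : Partn (Fin l) (Fin l)) (r : Partn (Fin k) (Fin l)) :
    rl q (vcomp r p) = rl q (vcomp (vcomp r p) (reflP r)) := by
  obtain ⟨hpp, hps⟩ := hp
  have hrp : vcomp (vcomp r p) p = vcomp r p := by rw [← vcomp_assoc, hpp]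
  have hs : vcomp (vcomp r p) (reflP r) = vcomp (vcomp r p) (reflP (vcomp r p)) := by
    rw [reflP_vcomp, hps, vcomp_assoc, hrp]
  rw [hs]
  exact rl_congr q (comap_inr_vcomp_reflP _).symm fun m => (exists_vcomp_reflP_iff _ m).symm

end Partitions
end

section
/- For any partitions p ∈ P(k, l) and q ∈ P(l, m) and any integer N ≥ 1, the associated linear maps on tensor powers of ℂ^N satisfy T_q ∘ T_p = N^{rl(q, p)} · T_{qp}, where qp is the vertical concatenation of p and q and rl(q, p) is the number of removed loops. -/
attribute [local instance] Classical.propDecidable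

namespace Partitions

variable {α β γ α' β' : Type}

/-!
Entry `(h, f)` of `T_q T_p` counts the labellings `g` of the middle row for which the labelling
`(f, g, h)` of the three-row diagram is constant on the blocks of `p` and of `q`, i.e. on the
classes of the glued relation. Such a `g` exists only if `(f, h)` is constant on the blocks of
`qp`; then `g` is forced on every class that meets an outer row and arbitrary on the remaining
classes, which are the removed loops, so there are `N ^ rl(q, p)` of them.
-/

open Setoid

theorem _root_.Setoid.comap_le_ker_comp_iff {X X' Z : Type*} {r : Setoid X'} {e : X → X'}
    (he : Function.Surjective e) {F : X' → Z} : r.comap e ≤ ker (F ∘ e) ↔ r ≤ ker F := by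
  refine ⟨fun h x y hxy => ?_, fun h _ _ hxy => h hxy⟩
  obtain ⟨x, rfl⟩ := he x
  obtain ⟨y, rfl⟩ := he y
  exact h hxy

section Extension

variable {Y B Z : Type*} (s : Setoid (Y ⊕ B))

def IsFree (b : B) : Prop := ∀ y, ¬ s (.inr b) (.inl y)

/-- The classes of `s` that contain no point of `Y`; for the glued three-row diagram, these
are the removed loops. -/
abbrev FreeClasses := Quotient (s.comap fun b : {b // IsFree s b} => Sum.inr b.1)

variable {s} {F₀ : Y → Z}

noncomputable def extendFree (F₀ : Y → Z) (φ : FreeClasses s → Z) (b : B) : Z :=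
  if hb : ∃ y, s (.inr b) (.inl y) then F₀ hb.choose else φ ⟦⟨b, not_exists.mp hb⟩⟧

theorem sumElim_extendFree_of_rel (hF₀ : s.comap Sum.inl ≤ ker F₀) (φ : FreeClasses s → Z)
    {x : Y ⊕ B} {y : Y} (hxy : s x (.inl y)) : Sum.elim F₀ (extendFree F₀ φ) x = F₀ y := by
  cases x with
  | inl y' => exact hF₀ hxy
  | inr b =>
    have hb : ∃ y, s (.inr b) (.inl y) := ⟨y, hxy⟩
    rw [Sum.elim_inr, extendFree, dif_pos hb]
    exact hF₀ (s.trans' (s.symm' hb.choose_spec) hxy)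

theorem le_ker_sumElim_extendFree (hF₀ : s.comap Sum.inl ≤ ker F₀) (φ : FreeClasses s → Z) :
    s ≤ ker (Sum.elim F₀ (extendFree F₀ φ)) := by
  intro x x' hxx'
  by_cases hx : ∃ y, s x (.inl y)
  · obtain ⟨y, hy⟩ := hx
    exact (sumElim_extendFree_of_rel hF₀ φ hy).trans
      (sumElim_extendFree_of_rel hF₀ φ (s.trans' (s.symm' hxx') hy)).symm
  · have hx' : ¬ ∃ y, s x' (.inl y) := fun ⟨y, hy⟩ => hx ⟨y, s.trans' hxx' hy⟩
    obtain ⟨b, rfl⟩ : ∃ b, x = .inr b := by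
      rcases x with y | b
      · exact absurd ⟨y, s.refl' _⟩ hx
      · exact ⟨b, rfl⟩
    obtain ⟨b', rfl⟩ : ∃ b', x' = .inr b' := by
      rcases x' with y | b'
      · exact absurd ⟨y, s.refl' _⟩ hx'
      · exact ⟨b', rfl⟩
    change extendFree F₀ φ b = extendFree F₀ φ b'
    rw [extendFree, dif_neg hx, extendFree, dif_neg hx']
    exact congrArg φ (Quotient.sound hxx')

noncomputable def kerSumElimEquiv (hF₀ : s.comap Sum.inl ≤ ker F₀) :
    {g : B → Z // s ≤ ker (Sum.elim F₀ g)} ≃ (FreeClasses s → Z) where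
  toFun g := Quotient.lift (fun b => g.1 b.1) fun _ _ hbb' => g.2 hbb'
  invFun φ := ⟨extendFree F₀ φ, le_ker_sumElim_extendFree hF₀ φ⟩
  left_inv g := by
    refine Subtype.ext (funext fun b => ?_)
    change extendFree F₀ _ b = g.1 b
    by_cases hb : ∃ y, s (.inr b) (.inl y)
    · rw [extendFree, dif_pos hb]
      exact (g.2 hb.choose_spec).symm
    · rw [extendFree, dif_neg hb]
      rfl
  right_inv φ := by
    refine funext (Quotient.ind fun b => ?_)
    change extendFree F₀ φ b.1 = φ ⟦b⟧
    rw [extendFree, dif_neg (not_exists.mpr b.2)]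

theorem card_le_ker_sumElim [Finite B] :
    Nat.card {g : B → Z // s ≤ ker (Sum.elim F₀ g)} =
      if s.comap Sum.inl ≤ ker F₀ then Nat.card Z ^ Nat.card (FreeClasses s) else 0 := by
  split_ifs with hF₀
  · rw [Nat.card_congr (kerSumElimEquiv hF₀), Nat.card_fun]
  · have : IsEmpty {g : B → Z // s ≤ ker (Sum.elim F₀ g)} :=
      ⟨fun g => hF₀ fun _ _ hyy' => g.2 hyy'⟩
    exact Nat.card_of_isEmpty

end Extension

theorem deltaP_eq_ite {N : ℕ} (p : Partn α β) (f : α → Fin N) (g : β → Fin N) :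
    deltaP N p f g = if p ≤ ker (Sum.elim f g) then 1 else 0 :=
  rfl

section ThreeRows

variable (q : Partn β γ) (p : Partn α β)

theorem glue_le_ker_iff {X : Type*} (F : α ⊕ β ⊕ γ → X) :
    glue q p ≤ ker F ↔ p ≤ ker (F ∘ iTop) ∧ q ≤ ker (F ∘ iBot α) := by
  refine ⟨fun h => ⟨fun u v huv => h ?_, fun u v huv => h ?_⟩, fun ⟨hp, hq⟩ => eqvGen_le ?_⟩
  · exact .rel _ _ (.inl ⟨u, v, huv, rfl, rfl⟩)
  · exact .rel _ _ (.inr ⟨u, v, huv, rfl, rfl⟩)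
  · rintro _ _ (⟨u, v, huv, rfl, rfl⟩ | ⟨u, v, huv, rfl, rfl⟩)
    exacts [hp huv, hq huv]

def outerMid : (α ⊕ γ) ⊕ β → α ⊕ β ⊕ γ := Sum.elim iOut (iMid α γ)

theorem outerMid_surjective : Function.Surjective (outerMid (α := α) (β := β) (γ := γ)) := by
  rintro (a | b | c)
  exacts [⟨.inl (.inl a), rfl⟩, ⟨.inr b, rfl⟩, ⟨.inl (.inr c), rfl⟩]

variable {N : ℕ} (f : α → Fin N) (g : β → Fin N) (h : γ → Fin N)

theorem sumElim_comp_iTop : Sum.elim f (Sum.elim g h) ∘ iTop = Sum.elim f g := by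
  ext (a | b) <;> rfl

theorem sumElim_comp_iBot : Sum.elim f (Sum.elim g h) ∘ iBot α = Sum.elim g h :=
  rfl

theorem sumElim_comp_outerMid :
    Sum.elim f (Sum.elim g h) ∘ outerMid = Sum.elim (Sum.elim f h) g := by
  ext ((a | c) | b) <;> rfl

theorem deltaP_mul_deltaP : deltaP N q g h * deltaP N p f g =
    if glue q p ≤ ker (Sum.elim f (Sum.elim g h)) then 1 else 0 := by
  rw [glue_le_ker_iff, sumElim_comp_iTop, sumElim_comp_iBot, deltaP_eq_ite, deltaP_eq_ite]
  split_ifs <;> simp_all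

theorem card_glue_le_ker [Finite β] :
    Nat.card {g : β → Fin N // glue q p ≤ ker (Sum.elim f (Sum.elim g h))} =
      if vcomp q p ≤ ker (Sum.elim f h) then N ^ rl q p else 0 := by
  have hglue (g : β → Fin N) : glue q p ≤ ker (Sum.elim f (Sum.elim g h)) ↔
      (glue q p).comap outerMid ≤ ker (Sum.elim (Sum.elim f h) g) := by
    rw [← sumElim_comp_outerMid, comap_le_ker_comp_iff outerMid_surjective]
  rw [Nat.card_congr (Equiv.subtypeEquivRight hglue), card_le_ker_sumElim, Nat.card_fin]
  -- `vcomp q p` and the quotient counted by `rl q p` unfold to the outer relation and the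
  -- free classes of `(glue q p).comap outerMid`.
  rfl

end ThreeRows

theorem partMatrix_mul_general (k l m N : ℕ)
    (p : Partn (Fin k) (Fin l)) (q : Partn (Fin l) (Fin m)) :
    partMatrix N q * partMatrix N p = ((N : ℂ) ^ rl q p) • partMatrix N (vcomp q p) := by
  ext h f
  rw [Matrix.mul_apply, Matrix.smul_apply]
  simp only [partMatrix, deltaP_mul_deltaP]
  rw [Finset.sum_boole, ← Fintype.card_subtype, ← Nat.card_eq_fintype_card, card_glue_le_ker,
    deltaP_eq_ite]
  split_ifs <;> simp

/-- `T_q ∘ T_p = N^{rl(q,p)} · T_{qp}` for all partitions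
`p ∈ P(k,l)`, `q ∈ P(l,m)` and `N ≥ 1`. -/
theorem partMatrix_mul (k l m N : ℕ) (hN : 1 ≤ N)
    (p : Partn (Fin k) (Fin l)) (q : Partn (Fin l) (Fin m)) :
    partMatrix N q * partMatrix N p = ((N : ℂ) ^ rl q p) • partMatrix N (vcomp q p) :=
  partMatrix_mul_general k l m N p q

end Partitions
end

section
/- For any partitions p ∈ P(k, l) and q ∈ P(k', l') and any integer N ≥ 1, the linear map associated with the horizontal concatenation p ⊙ q ∈ P(k+k', l+l') equals the tensor product of the linear maps: T_{p⊙q} = T_p ⊗ T_q as a map (ℂ^N)^{⊗(k+k')} → (ℂ^N)^{⊗(l+l')} under the canonical identifications of tensor powers. -/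
attribute [local instance] Classical.propDecidable

namespace Partitions

variable {α β γ α' β' : Type}

open scoped Kronecker

/-! The blocks of `p ⊙ q` are the blocks of `p` together with those of `q`, so a multi-index is
constant on the blocks of `p ⊙ q` iff its two halves are constant on the blocks of `p` and of `q`:
`δ_{p⊙q} = δ_p · δ_q`, which is exactly the entry of the Kronecker product `T_p ⊗ T_q`. -/

section Concat

variable {X : Type*}

lemma deltaP_eq_ite_le_ker (N : ℕ) (p : Partn α β) (f : α → Fin N) (g : β → Fin N) :
    deltaP N p f g = if p ≤ Setoid.ker (Sum.elim f g) then 1 else 0 := by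
  simp only [deltaP, Setoid.le_def, Setoid.ker_def]

lemma sumSetoid_le_ker_iff (p : Setoid α) (q : Setoid β) (h : α ⊕ β → X) :
    sumSetoid p q ≤ Setoid.ker h ↔
      p ≤ Setoid.ker (h ∘ Sum.inl) ∧ q ≤ Setoid.ker (h ∘ Sum.inr) := by
  constructor
  · intro H
    exact ⟨fun _ _ hr => H (.inl hr), fun _ _ hr => H (.inr hr)⟩
  · rintro ⟨hp, hq⟩ _ _ (hr | hr)
    exacts [hp hr, hq hr]

lemma comap_equiv_le_ker_iff {γ : Type*} (e : α ≃ γ) (s : Setoid γ) (h : α → X) :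
    Setoid.comap e s ≤ Setoid.ker h ↔ s ≤ Setoid.ker (h ∘ e.symm) := by
  constructor
  · intro H x y hr
    simpa using H (x := e.symm x) (y := e.symm y) (by simpa [Setoid.comap_rel] using hr)
  · intro H x y hr
    simpa using H hr

lemma hconcat_le_ker_iff (p : Partn α β) (q : Partn α' β') (f : α ⊕ α' → X)
    (g : β ⊕ β' → X) :
    hconcat p q ≤ Setoid.ker (Sum.elim f g) ↔
      p ≤ Setoid.ker (Sum.elim (f ∘ Sum.inl) (g ∘ Sum.inl)) ∧
        q ≤ Setoid.ker (Sum.elim (f ∘ Sum.inr) (g ∘ Sum.inr)) := by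
  have h_inl : (Sum.elim f g ∘ (Equiv.sumSumSumComm α α' β β').symm) ∘ Sum.inl =
      Sum.elim (f ∘ Sum.inl) (g ∘ Sum.inl) := by
    ext (_ | _) <;> rfl
  have h_inr : (Sum.elim f g ∘ (Equiv.sumSumSumComm α α' β β').symm) ∘ Sum.inr =
      Sum.elim (f ∘ Sum.inr) (g ∘ Sum.inr) := by
    ext (_ | _) <;> rfl
  rw [hconcat, comap_equiv_le_ker_iff, sumSetoid_le_ker_iff, h_inl, h_inr]

lemma deltaP_hconcat (N : ℕ) (p : Partn α β) (q : Partn α' β') (f : α ⊕ α' → Fin N)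
    (g : β ⊕ β' → Fin N) :
    deltaP N (hconcat p q) f g =
      deltaP N p (f ∘ Sum.inl) (g ∘ Sum.inl) * deltaP N q (f ∘ Sum.inr) (g ∘ Sum.inr) := by
  simp only [deltaP_eq_ite_le_ker, hconcat_le_ker_iff, ite_zero_mul_ite_zero, mul_one]

end Concat

theorem partMatrix_hconcat_general (k l k' l' N : ℕ)
    (p : Partn (Fin k) (Fin l)) (q : Partn (Fin k') (Fin l')) :
    partMatrix N (hconcat p q) =
      (partMatrix N p ⊗ₖ partMatrix N q).submatrix
        (Equiv.sumArrowEquivProdArrow (Fin l) (Fin l') (Fin N))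
        (Equiv.sumArrowEquivProdArrow (Fin k) (Fin k') (Fin N)) := by
  ext g f
  exact deltaP_hconcat N p q f g

/-- `T_{p⊙q} = T_p ⊗ T_q` for all partitions `p ∈ P(k,l)`,
`q ∈ P(k',l')` and `N ≥ 1`, under the canonical identifications of tensor powers. -/
theorem partMatrix_hconcat (k l k' l' N : ℕ) (hN : 1 ≤ N)
    (p : Partn (Fin k) (Fin l)) (q : Partn (Fin k') (Fin l')) :
    partMatrix N (hconcat p q) =
      (partMatrix N p ⊗ₖ partMatrix N q).submatrix
        (Equiv.sumArrowEquivProdArrow (Fin l) (Fin l') (Fin N))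
        (Equiv.sumArrowEquivProdArrow (Fin k) (Fin k') (Fin N)) :=
  partMatrix_hconcat_general k l k' l' N p q

end Partitions
end

section
/- Let π : A → B be a surjective morphism of Hopf algebras over a field k, (C, γ) a right B-comodule algebra, and Ind(C) ⊆ C ⊗ A the induced A-comodule algebra (cotensor product). For a finite-dimensional right A-comodule (V, δ_V), let Res(V) be V with the B-comodule structure (id ⊗ π)∘δ_V. Then the map T ↦ (T ⊗ id_A)∘δ_V is a linear isomorphism from Hom_{B-comod}(Res(V), C) (linear maps T : V → C with γ∘T = (T ⊗ id_B)∘δ_{Res(V)}) onto Hom_{A-comod}(V, Ind(C)) (linear maps T' : V → Ind(C) with (id ⊗ Δ_A)∘T' = (T' ⊗ id_A)∘δ_V), with inverse T' ↦ (id_C ⊗ ε_A)∘T'. -/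
/-!
Both maps are formal consequences of the comodule axioms. Counitality of `δ_V` gives
`frobInv ∘ frobMap = id`; for an `A`-colinear `T'`, colinearity turns `frobMap (frobInv T')` into
`(id ⊗ (ε ⊗ id) ∘ Δ) ∘ T'`, which is `T'` by counitality of `A`. Coassociativity of `δ_V`
makes `frobMap T` colinear, and, combined with the `B`-colinearity of `T`, places it in the
cotensor product. Conversely, applying `id ⊗ ε` to the cotensor condition
`(γ ⊗ id) T' = (id ⊗ (π ⊗ id) Δ) T'` shows that `frobInv T'` is `B`-colinear.
-/

open scoped TensorProduct

noncomputable section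

variable (K : Type) [Field K]
variable (A : Type) [Ring A] [HopfAlgebra K A]
variable (B : Type) [Ring B] [HopfAlgebra K B]
variable (C : Type) [Ring C] [Algebra K C]
variable (V : Type) [AddCommGroup V] [Module K V]

/-- The cotensor product `Ind(C) = C □_B A` inside `C ⊗ A`. -/
def IndSub (π : A →ₐ[K] B) (γ : C →ₐ[K] C ⊗[K] B) : Submodule K (C ⊗[K] A) :=
  LinearMap.eqLocus
    ((TensorProduct.assoc K C B A).toLinearMap ∘ₗ
      TensorProduct.map γ.toLinearMap LinearMap.id)
    (TensorProduct.map LinearMap.id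
      (TensorProduct.map π.toLinearMap LinearMap.id ∘ₗ Coalgebra.comul (R := K)))

/-- `T : V → C` is a morphism of `B`-comodules from `Res(V)` to `C`, where `Res(V)`
carries the coaction `(id ⊗ π) ∘ δ_V`. -/
def IsResMor (π : A →ₐ[K] B) (γ : C →ₐ[K] C ⊗[K] B) (δV : V →ₗ[K] V ⊗[K] A)
    (T : V →ₗ[K] C) : Prop :=
  ∀ v : V, γ (T v) =
    (T.rTensor B) ((TensorProduct.map LinearMap.id π.toLinearMap) (δV v))

/-- `T' : V → C ⊗ A` is a morphism of `A`-comodules into `Ind(C)`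
(with coaction `id ⊗ Δ_A`). -/
def IsIndMor (π : A →ₐ[K] B) (γ : C →ₐ[K] C ⊗[K] B) (δV : V →ₗ[K] V ⊗[K] A)
    (T' : V →ₗ[K] C ⊗[K] A) : Prop :=
  (∀ v : V, T' v ∈ IndSub K A B C π γ) ∧
  ∀ v : V, (TensorProduct.map LinearMap.id (Coalgebra.comul (R := K))) (T' v) =
    (TensorProduct.assoc K C A A) ((T'.rTensor A) (δV v))

/-- The Frobenius map `T ↦ (T ⊗ id_A) ∘ δ_V`. -/
def frobMap (δV : V →ₗ[K] V ⊗[K] A) (T : V →ₗ[K] C) : V →ₗ[K] C ⊗[K] A :=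
  T.rTensor A ∘ₗ δV

/-- The inverse Frobenius map `T' ↦ (id_C ⊗ ε_A) ∘ T'`. -/
def frobInv (T' : V →ₗ[K] C ⊗[K] A) : V →ₗ[K] C :=
  (TensorProduct.rid K C).toLinearMap ∘ₗ
    (TensorProduct.map LinearMap.id (Coalgebra.counit (R := K))) ∘ₗ T'

namespace TensorProduct

variable {R M N P Q : Type*} [CommSemiring R] [AddCommMonoid M] [AddCommMonoid N]
  [AddCommMonoid P] [AddCommMonoid Q] [Module R M] [Module R N] [Module R P] [Module R Q]

theorem rid_comp_lTensor_comp_rTensor (φ : P →ₗ[R] R) (g : M →ₗ[R] N) :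
    (TensorProduct.rid R N).toLinearMap ∘ₗ φ.lTensor N ∘ₗ g.rTensor P =
      g ∘ₗ (TensorProduct.rid R M).toLinearMap ∘ₗ φ.lTensor M :=
  ext' fun m p => by simp

theorem rTensor_rid_comp_lTensor (φ : P →ₗ[R] R) :
    ((TensorProduct.rid R M).toLinearMap ∘ₗ φ.lTensor M).rTensor N =
      ((TensorProduct.lid R N).toLinearMap ∘ₗ φ.rTensor N).lTensor M ∘ₗ
        (TensorProduct.assoc R M P N).toLinearMap :=
  ext_threefold fun m p n => by simp [smul_tmul]

theorem lTensor_rid_comp_lTensor_comp_assoc (φ : P →ₗ[R] R) :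
    ((TensorProduct.rid R N).toLinearMap ∘ₗ φ.lTensor N).lTensor M ∘ₗ
        (TensorProduct.assoc R M N P).toLinearMap =
      (TensorProduct.rid R (M ⊗[R] N)).toLinearMap ∘ₗ φ.lTensor (M ⊗[R] N) :=
  ext_threefold fun m n p => by simp [tmul_smul]

theorem assoc_comp_rTensor_rTensor (f : M →ₗ[R] N) :
    (TensorProduct.assoc R N P Q).toLinearMap ∘ₗ (f.rTensor P).rTensor Q =
      f.rTensor (P ⊗[R] Q) ∘ₗ (TensorProduct.assoc R M P Q).toLinearMap :=
  ext_threefold fun _ _ _ => rfl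

end TensorProduct

section CounitComul

variable {R H : Type*} [CommSemiring R] [AddCommMonoid H] [Module R H] [Coalgebra R H]

open Coalgebra

theorem lid_comp_rTensor_counit_comp_comul :
    (TensorProduct.lid R H).toLinearMap ∘ₗ counit.rTensor H ∘ₗ comul = LinearMap.id := by
  ext; simp

theorem rid_comp_lTensor_counit_comp_comul :
    (TensorProduct.rid R H).toLinearMap ∘ₗ counit.lTensor H ∘ₗ comul = LinearMap.id := by
  ext; simp

end CounitComul

section Frobenius

variable {K A B C V}

open LinearMap TensorProduct Coalgebra

theorem isResMor_iff (π : A →ₐ[K] B) (γ : C →ₐ[K] C ⊗[K] B) (δV : V →ₗ[K] V ⊗[K] A)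
    (T : V →ₗ[K] C) :
    IsResMor K A B C V π γ δV T ↔
      γ.toLinearMap ∘ₗ T = T.rTensor B ∘ₗ π.toLinearMap.lTensor V ∘ₗ δV := by
  rw [LinearMap.ext_iff]; rfl

theorem isIndMor_iff (π : A →ₐ[K] B) (γ : C →ₐ[K] C ⊗[K] B) (δV : V →ₗ[K] V ⊗[K] A)
    (T' : V →ₗ[K] C ⊗[K] A) :
    IsIndMor K A B C V π γ δV T' ↔
      (TensorProduct.assoc K C B A).toLinearMap ∘ₗ γ.toLinearMap.rTensor A ∘ₗ T' =
          (π.toLinearMap.rTensor A ∘ₗ comul).lTensor C ∘ₗ T' ∧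
        comul.lTensor C ∘ₗ T' =
          (TensorProduct.assoc K C A A).toLinearMap ∘ₗ T'.rTensor A ∘ₗ δV := by
  rw [LinearMap.ext_iff, LinearMap.ext_iff]; rfl

theorem frobInv_eq (T' : V →ₗ[K] C ⊗[K] A) :
    frobInv K A C V T' = (TensorProduct.rid K C).toLinearMap ∘ₗ counit.lTensor C ∘ₗ T' := rfl

theorem frobMap_add (δV : V →ₗ[K] V ⊗[K] A) (T S : V →ₗ[K] C) :
    frobMap K A C V δV (T + S) = frobMap K A C V δV T + frobMap K A C V δV S := by
  rw [frobMap, frobMap, frobMap, rTensor_add, add_comp]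

theorem frobMap_smul (δV : V →ₗ[K] V ⊗[K] A) (c : K) (T : V →ₗ[K] C) :
    frobMap K A C V δV (c • T) = c • frobMap K A C V δV T := by
  rw [frobMap, frobMap, rTensor_smul, smul_comp]

theorem frobInv_frobMap {δV : V →ₗ[K] V ⊗[K] A}
    (hδV : (TensorProduct.rid K V).toLinearMap ∘ₗ counit.lTensor V ∘ₗ δV = LinearMap.id)
    (T : V →ₗ[K] C) :
    frobInv K A C V (frobMap K A C V δV T) = T :=
  calc frobInv K A C V (frobMap K A C V δV T)
      = ((TensorProduct.rid K C).toLinearMap ∘ₗ counit.lTensor C ∘ₗ T.rTensor A) ∘ₗ δV := rfl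
    _ = (T ∘ₗ (TensorProduct.rid K V).toLinearMap ∘ₗ counit.lTensor V) ∘ₗ δV := by
        rw [rid_comp_lTensor_comp_rTensor]
    _ = T := by rw [comp_assoc, comp_assoc, hδV, comp_id]

theorem frobMap_frobInv {δV : V →ₗ[K] V ⊗[K] A} {T' : V →ₗ[K] C ⊗[K] A}
    (hT' : comul.lTensor C ∘ₗ T' =
      (TensorProduct.assoc K C A A).toLinearMap ∘ₗ T'.rTensor A ∘ₗ δV) :
    frobMap K A C V δV (frobInv K A C V T') = T' :=
  calc frobMap K A C V δV (frobInv K A C V T')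
      = ((TensorProduct.rid K C).toLinearMap ∘ₗ counit.lTensor C).rTensor A ∘ₗ
          T'.rTensor A ∘ₗ δV := by
        rw [frobMap, frobInv_eq, ← comp_assoc, rTensor_comp, comp_assoc]
    _ = ((TensorProduct.lid K A).toLinearMap ∘ₗ counit.rTensor A).lTensor C ∘ₗ
          (TensorProduct.assoc K C A A).toLinearMap ∘ₗ T'.rTensor A ∘ₗ δV := by
        rw [rTensor_rid_comp_lTensor, comp_assoc]
    _ = ((TensorProduct.lid K A).toLinearMap ∘ₗ counit.rTensor A ∘ₗ comul).lTensor C ∘ₗ T' := by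
        rw [← hT', ← comp_assoc, ← lTensor_comp, comp_assoc]
    _ = T' := by rw [lid_comp_rTensor_counit_comp_comul, lTensor_id, id_comp]

theorem frobMap_isIndMor {π : A →ₐ[K] B} {γ : C →ₐ[K] C ⊗[K] B} {δV : V →ₗ[K] V ⊗[K] A}
    (hδV : (TensorProduct.assoc K V A A).toLinearMap ∘ₗ δV.rTensor A ∘ₗ δV =
      comul.lTensor V ∘ₗ δV)
    {T : V →ₗ[K] C} (hT : IsResMor K A B C V π γ δV T) :
    IsIndMor K A B C V π γ δV (frobMap K A C V δV T) := by
  rw [isResMor_iff] at hT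
  rw [isIndMor_iff, frobMap]
  constructor
  · calc (TensorProduct.assoc K C B A).toLinearMap ∘ₗ γ.toLinearMap.rTensor A ∘ₗ
          T.rTensor A ∘ₗ δV
        = (TensorProduct.assoc K C B A).toLinearMap ∘ₗ (T.rTensor B).rTensor A ∘ₗ
            (π.toLinearMap.lTensor V).rTensor A ∘ₗ δV.rTensor A ∘ₗ δV := by
          rw [← comp_assoc δV, ← rTensor_comp, hT, rTensor_comp, rTensor_comp]
          simp only [comp_assoc]
      _ = T.rTensor (B ⊗[K] A) ∘ₗ (π.toLinearMap.rTensor A).lTensor V ∘ₗ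
            (TensorProduct.assoc K V A A).toLinearMap ∘ₗ δV.rTensor A ∘ₗ δV := by
          rw [← comp_assoc, assoc_comp_rTensor_rTensor, comp_assoc,
            ← comp_assoc (δV.rTensor A ∘ₗ δV), ← lTensor_rTensor_comp_assoc, comp_assoc]
      _ = T.rTensor (B ⊗[K] A) ∘ₗ (π.toLinearMap.rTensor A ∘ₗ comul).lTensor V ∘ₗ δV := by
          rw [hδV, ← comp_assoc δV, ← lTensor_comp]
      _ = (π.toLinearMap.rTensor A ∘ₗ comul).lTensor C ∘ₗ T.rTensor A ∘ₗ δV := by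
          rw [← comp_assoc δV, ← comp_assoc δV, rTensor_comp_lTensor, lTensor_comp_rTensor]
  · calc comul.lTensor C ∘ₗ T.rTensor A ∘ₗ δV
        = T.rTensor (A ⊗[K] A) ∘ₗ comul.lTensor V ∘ₗ δV := by
          rw [← comp_assoc, ← comp_assoc, lTensor_comp_rTensor, rTensor_comp_lTensor]
      _ = (TensorProduct.assoc K C A A).toLinearMap ∘ₗ (T.rTensor A).rTensor A ∘ₗ
            δV.rTensor A ∘ₗ δV := by
          rw [← hδV, ← comp_assoc, ← assoc_comp_rTensor_rTensor, comp_assoc]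
      _ = (TensorProduct.assoc K C A A).toLinearMap ∘ₗ
            (T.rTensor A ∘ₗ δV).rTensor A ∘ₗ δV := by
          rw [rTensor_comp, comp_assoc]

theorem frobInv_isResMor {π : A →ₐ[K] B} {γ : C →ₐ[K] C ⊗[K] B} {δV : V →ₗ[K] V ⊗[K] A}
    {T' : V →ₗ[K] C ⊗[K] A} (hT' : IsIndMor K A B C V π γ δV T') :
    IsResMor K A B C V π γ δV (frobInv K A C V T') := by
  obtain ⟨hcotensor, hcolin⟩ := (isIndMor_iff π γ δV T').1 hT'
  rw [isResMor_iff]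
  calc γ.toLinearMap ∘ₗ frobInv K A C V T'
      = (γ.toLinearMap ∘ₗ (TensorProduct.rid K C).toLinearMap ∘ₗ counit.lTensor C) ∘ₗ T' := rfl
    _ = ((TensorProduct.rid K (C ⊗[K] B)).toLinearMap ∘ₗ counit.lTensor (C ⊗[K] B)) ∘ₗ
          γ.toLinearMap.rTensor A ∘ₗ T' := by
        rw [← rid_comp_lTensor_comp_rTensor]
        simp only [comp_assoc]
    _ = ((TensorProduct.rid K B).toLinearMap ∘ₗ counit.lTensor B).lTensor C ∘ₗ
          (TensorProduct.assoc K C B A).toLinearMap ∘ₗ γ.toLinearMap.rTensor A ∘ₗ T' := by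
        rw [← lTensor_rid_comp_lTensor_comp_assoc, comp_assoc]
    _ = ((TensorProduct.rid K B).toLinearMap ∘ₗ counit.lTensor B ∘ₗ
          π.toLinearMap.rTensor A ∘ₗ comul).lTensor C ∘ₗ T' := by
        rw [hcotensor, ← comp_assoc, ← lTensor_comp]
        simp only [comp_assoc]
    _ = (π.toLinearMap ∘ₗ (TensorProduct.rid K A).toLinearMap ∘ₗ counit.lTensor A ∘ₗ
          comul).lTensor C ∘ₗ T' := by
        rw [← comp_assoc comul, ← comp_assoc comul, rid_comp_lTensor_comp_rTensor]
        simp only [comp_assoc]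
    _ = π.toLinearMap.lTensor C ∘ₗ frobMap K A C V δV (frobInv K A C V T') := by
        rw [rid_comp_lTensor_counit_comp_comul, comp_id, frobMap_frobInv hcolin]
    _ = (frobInv K A C V T').rTensor B ∘ₗ π.toLinearMap.lTensor V ∘ₗ δV := by
        rw [frobMap, ← comp_assoc, ← comp_assoc, lTensor_comp_rTensor, rTensor_comp_lTensor]

end Frobenius

theorem frobenius_reciprocity
    (π : A →ₐ[K] B)
    (γ : C →ₐ[K] C ⊗[K] B)
    (δV : V →ₗ[K] V ⊗[K] A)
    (hδVcoassoc : ∀ v : V,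
      (TensorProduct.assoc K V A A) ((δV.rTensor A) (δV v)) =
        (TensorProduct.map LinearMap.id (Coalgebra.comul (R := K))) (δV v))
    (hδVcounit : ∀ v : V,
      (TensorProduct.rid K V)
          ((TensorProduct.map LinearMap.id (Coalgebra.counit (R := K))) (δV v)) = v) :
    (∀ T S : V →ₗ[K] C, frobMap K A C V δV (T + S) =
      frobMap K A C V δV T + frobMap K A C V δV S) ∧
    (∀ (c : K) (T : V →ₗ[K] C), frobMap K A C V δV (c • T) = c • frobMap K A C V δV T) ∧
    (∀ T : V →ₗ[K] C, IsResMor K A B C V π γ δV T →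
      IsIndMor K A B C V π γ δV (frobMap K A C V δV T)) ∧
    (∀ T' : V →ₗ[K] C ⊗[K] A, IsIndMor K A B C V π γ δV T' →
      IsResMor K A B C V π γ δV (frobInv K A C V T')) ∧
    (∀ T : V →ₗ[K] C, IsResMor K A B C V π γ δV T →
      frobInv K A C V (frobMap K A C V δV T) = T) ∧
    (∀ T' : V →ₗ[K] C ⊗[K] A, IsIndMor K A B C V π γ δV T' →
      frobMap K A C V δV (frobInv K A C V T') = T') :=
  ⟨frobMap_add δV, frobMap_smul δV,
    fun _ => frobMap_isIndMor (LinearMap.ext hδVcoassoc),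
    fun _ => frobInv_isResMor,
    fun T _ => frobInv_frobMap (LinearMap.ext hδVcounit) T,
    fun T' hT' => frobMap_frobInv ((isIndMor_iff π γ δV T').1 hT').2⟩

end
end
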